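/- arXiv:2505.04986 — 4 statements merged into one kernel-verified Lean document; each statement's English description precedes it below -/
import Mathlib

section
/- Under the setup of the previous lemma, with imputation operator I(x, O) defined by [I(x,O)]_j = x_j if j ∉ O and [I(x,O)]_j = φ_j({x_l}_{l∉O}) if j ∈ O, sure detection O* ⊆ D(X̃) together with isolated detection implies I(X̃, D(X̃)) = I(X, D(X) ∪ O*). That is, the detect-then-impute output on the contaminated vector equals the imputation of the clean vector with mask D(X) ∪ O*. -/
/-! Detection is coordinatewise and sure, so contaminating the coordinates of `O*` changes the
detected set only inside `O*`, which it already contains: `D(X̃) = D(X) ∪ O*`. Outside this mask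
`X̃` coincides with `X`, and the imputation only reads the coordinates outside the mask. -/

theorem Finset.filter_coord_eq_union_of_subset {ι α : Type*} [Fintype ι] [DecidableEq ι]
    (p : ι → α → Prop) [∀ j a, Decidable (p j a)] {x x' : ι → α} {O : Finset ι}
    (hagree : ∀ j ∉ O, x j = x' j) (hO : O ⊆ univ.filter fun j => p j (x j)) :
    (univ.filter fun j => p j (x j)) = (univ.filter fun j => p j (x' j)) ∪ O := by
  ext j
  by_cases hj : j ∈ O
  · simp [hO hj, hj]
  · simp [hagree j hj, hj]

theorem detect_then_impute_identity_general (d : ℕ) (X Z : Fin d → ℝ) (Ostar : Finset (Fin d))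
    (s : Fin d → ℝ → ℝ) (τ : Fin d → ℝ)
    (Xt : Fin d → ℝ) (hXt : ∀ j, Xt j = if j ∈ Ostar then Z j else X j)
    (D : (Fin d → ℝ) → Finset (Fin d))
    (hD : ∀ x, D x = Finset.univ.filter (fun j => τ j < s j (x j)))
    (hsure : Ostar ⊆ D Xt)
    (I : (Fin d → ℝ) → Finset (Fin d) → (Fin d → ℝ))
    -- imputed values depend only on the coordinates outside the mask
    (hIdep : ∀ x x' O, (∀ l ∉ O, x l = x' l) → I x O = I x' O) :
    I Xt (D Xt) = I X (D X ∪ Ostar) := by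
  have hclean : ∀ j ∉ Ostar, Xt j = X j := fun j hj => by simp [hXt j, hj]
  have hmask : D Xt = D X ∪ Ostar := by
    rw [hD, hD]
    exact Finset.filter_coord_eq_union_of_subset (fun j a => τ j < s j a) hclean (hD Xt ▸ hsure)
  rw [hmask]
  exact hIdep Xt X _ fun l hl => hclean l fun h => hl (Finset.mem_union_right _ h)

/-- Detect-then-impute identity: under sure detection and isolated detection,
`I(X̃, D(X̃)) = I(X, D(X) ∪ O*)`. -/
theorem detect_then_impute_identity (d : ℕ) (X Z : Fin d → ℝ) (Ostar : Finset (Fin d))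
    (s : Fin d → ℝ → ℝ) (τ : Fin d → ℝ)
    (Xt : Fin d → ℝ) (hXt : ∀ j, Xt j = if j ∈ Ostar then Z j else X j)
    (D : (Fin d → ℝ) → Finset (Fin d))
    (hD : ∀ x, D x = Finset.univ.filter (fun j => τ j < s j (x j)))
    (hsure : Ostar ⊆ D Xt)
    (I : (Fin d → ℝ) → Finset (Fin d) → (Fin d → ℝ))
    -- unmasked coordinates are left unchanged
    (hIobs : ∀ x O j, j ∉ O → I x O j = x j)
    -- imputed values depend only on the coordinates outside the mask
    (hIdep : ∀ x x' O, (∀ l ∉ O, x l = x' l) → I x O = I x' O) :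
    I Xt (D Xt) = I X (D X ∪ Ostar) :=
  detect_then_impute_identity_general d X Z Ostar s τ Xt hXt D hD hsure I hIdep
end

section
/- Let R_{n_0},...,R_{n+1} be exchangeable real-valued random variables, and let q̂ be the ⌈(1-α)(m+1)⌉-th smallest value among R_{n_0},...,R_n, where m = n - n_0 + 1. Then P(R_{n+1} ≤ q̂) ≥ 1 - α. -/
open MeasureTheory

/-- The `k`-th smallest element (k ≥ 1) of a finite list of reals. -/
noncomputable def orderStat (k : ℕ) (r : List ℝ) : ℝ :=
  (r.mergeSort (fun a b => a ≤ b)).getD (k - 1) 0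

/-!
With `k = ⌈(1-α)(m+1)⌉`, call `j` *low* if fewer than `k` of the `R i` lie strictly below `R j`.
Whatever the outcome, at least `k` of the `m + 1` indices are low, and by exchangeability every
index is low with the same probability, so the last one is low with probability at least
`k / (m + 1) ≥ 1 - α`. When the last index is low, fewer than `k` calibration residuals lie below
`R m`, so `R m` is at most their `k`-th smallest value.
-/

open Finset
open scoped ENNReal

theorem List.Pairwise.le_getElem_of_countP_le {α : Type*} [LinearOrder α] {v : α} :
    ∀ {s : List α}, s.Pairwise (· ≤ ·) → ∀ {k : ℕ} (hk : k < s.length),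
      s.countP (· < v) ≤ k → v ≤ s[k]
  | [], _, k, hk, _ => absurd hk (Nat.not_lt_zero k)
  | a :: t, hs, k, hk, hcount => by
    rw [List.pairwise_cons] at hs
    rw [List.countP_cons] at hcount
    rcases lt_or_ge a v with hav | hav
    · cases k with
      | zero => simp [hav] at hcount
      | succ k => exact hs.2.le_getElem_of_countP_le _ (by simpa [hav] using hcount)
    · cases k with
      | zero => exact hav
      | succ k => exact hav.trans (hs.1 _ (List.getElem_mem _))

theorem List.countP_ofFn {α : Type*} {m : ℕ} (y : Fin m → α) (p : α → Prop) [DecidablePred p] :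
    (List.ofFn y).countP (fun a => decide (p a)) = #{i | p (y i)} := by
  rw [← Multiset.coe_countP, ← Fin.univ_val_map, Multiset.countP_map]
  rfl

theorem le_orderStat_of_card_lt {m k : ℕ} (hkm : k ≤ m) (y : Fin m → ℝ) (v : ℝ)
    (h : #{i | y i < v} < k) : v ≤ orderStat k (List.ofFn y) := by
  have hlen : k - 1 < ((List.ofFn y).mergeSort (fun a b => a ≤ b)).length := by
    rw [List.length_mergeSort, List.length_ofFn]; omega
  rw [orderStat, List.getD_eq_getElem _ _ hlen]
  refine (List.pairwise_mergeSort' (· ≤ ·) _).le_getElem_of_countP_le hlen ?_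
  rw [(List.mergeSort_perm _ _).countP_eq, List.countP_ofFn]
  omega

section Rank

variable {ι : Type*} [Fintype ι]

def strictRank {α : Type*} [LinearOrder α] (x : ι → α) (j : ι) : ℕ := #{i | x i < x j}

theorem strictRank_comp_perm {α : Type*} [LinearOrder α] (x : ι → α) (σ : Equiv.Perm ι) (j : ι) :
    strictRank (x ∘ σ) j = strictRank x (σ j) := by
  simp only [strictRank, Finset.card_filter, Function.comp_apply]
  exact Equiv.sum_comp σ (fun i => if x i < x (σ j) then 1 else 0)

-- If some index has rank `≥ k`, every value strictly below the least such one has rank `< k`.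
theorem le_card_filter_strictRank_lt {α : Type*} [LinearOrder α] (x : ι → α) {k : ℕ}
    (hk : k ≤ Fintype.card ι) : k ≤ #{j | strictRank x j < k} := by
  rcases (univ.filter fun j => ¬ strictRank x j < k).eq_empty_or_nonempty with hnone | hsome
  · rw [Finset.filter_eq_empty_iff] at hnone
    simpa [Finset.filter_true_of_mem fun j _ => not_not.mp (hnone (mem_univ j))] using hk
  · obtain ⟨j₀, hj₀, hmin⟩ := exists_min_image _ x hsome
    calc k ≤ strictRank x j₀ := not_lt.mp (mem_filter.mp hj₀).2
      _ ≤ #{j | strictRank x j < k} := by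
        refine card_le_card fun i hi => mem_filter.mpr ⟨mem_univ i, ?_⟩
        by_contra hik
        exact (mem_filter.mp hi).2.not_ge (hmin i (mem_filter.mpr ⟨mem_univ i, hik⟩))

theorem measurable_strictRank (j : ι) : Measurable fun x : ι → ℝ => strictRank x j := by
  simp only [strictRank, Finset.card_filter]
  exact Finset.measurable_sum _ fun i _ => Measurable.ite
    (measurableSet_lt (measurable_pi_apply i) (measurable_pi_apply j)) measurable_const
    measurable_const

end Rank

open scoped Classical in
theorem MeasureTheory.Measure.le_sum_measure_of_forall_le_card {Ω ι : Type*} [MeasurableSpace Ω]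
    [Fintype ι] (μ : Measure Ω) {A : ι → Set Ω} (hA : ∀ i, MeasurableSet (A i)) {k : ℕ}
    (h : ∀ ω, k ≤ #{i | ω ∈ A i}) : k * μ Set.univ ≤ ∑ i, μ (A i) := by
  calc k * μ Set.univ = ∫⁻ _, (k : ℝ≥0∞) ∂μ := by simp
    _ ≤ ∫⁻ ω, ∑ i, (A i).indicator 1 ω ∂μ := lintegral_mono fun ω => by
        simp only [Set.indicator_apply, Pi.one_apply, Finset.sum_boole]
        exact_mod_cast h ω
    _ = ∑ i, μ (A i) := by
        rw [lintegral_finsetSum _ fun i _ => measurable_one.indicator (hA i)]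
        simp [lintegral_indicator_one (hA _)]

theorem measure_preimage_comp_perm {Ω ι β : Type*} [MeasurableSpace Ω] [MeasurableSpace β]
    {μ : Measure Ω} {V : Ω → ι → β} (hV : Measurable V) {σ : Equiv.Perm ι}
    (hσ : μ.map (fun ω => V ω ∘ σ) = μ.map V) {B : Set (ι → β)} (hB : MeasurableSet B) :
    μ {ω | V ω ∘ σ ∈ B} = μ (V ⁻¹' B) := by
  have hVσ : Measurable fun ω => V ω ∘ σ :=
    measurable_pi_lambda _ fun i => (measurable_pi_apply (σ i)).comp hV
  rw [← Measure.map_apply hV hB, ← hσ, Measure.map_apply hVσ hB]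
  rfl

theorem card_le_card_mul_measure_strictRank_lt {Ω ι : Type*} [MeasurableSpace Ω] [Fintype ι]
    [DecidableEq ι] {μ : Measure Ω} [IsProbabilityMeasure μ] {V : Ω → ι → ℝ} (hV : Measurable V)
    (hexch : ∀ σ : Equiv.Perm ι, μ.map (fun ω => V ω ∘ σ) = μ.map V) {k : ℕ}
    (hk : k ≤ Fintype.card ι) (j : ι) :
    (k : ℝ≥0∞) ≤ Fintype.card ι * μ {ω | strictRank (V ω) j < k} := by
  have hmeas : ∀ i, MeasurableSet {ω | strictRank (V ω) i < k} := fun i =>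
    hV (measurable_strictRank i measurableSet_Iio)
  have hsame : ∀ i, μ {ω | strictRank (V ω) i < k} = μ {ω | strictRank (V ω) j < k} := by
    intro i
    simpa [strictRank_comp_perm] using measure_preimage_comp_perm hV (hexch (Equiv.swap j i))
      (B := {x | strictRank x j < k}) (measurable_strictRank j measurableSet_Iio)
  simpa [hsame] using μ.le_sum_measure_of_forall_le_card hmeas fun ω => by
    convert le_card_filter_strictRank_lt (V ω) hk; exact Iff.rfl

theorem conformal_coverage_general {Ω : Type*} [MeasurableSpace Ω]
    (ℙ : Measure Ω) [IsProbabilityMeasure ℙ]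
    (m : ℕ) (α : ℝ)
    (R : Fin (m + 1) → Ω → ℝ) (hmeas : ∀ i, Measurable (R i))
    (hexch : ∀ σ : Equiv.Perm (Fin (m + 1)),
      Measure.map (fun ω i => R (σ i) ω) ℙ = Measure.map (fun ω i => R i ω) ℙ)
    (hk : (⌈(1 - α) * (m + 1)⌉ : ℤ) ≤ (m : ℤ)) :
    ENNReal.ofReal (1 - α) ≤
      ℙ {ω | R (Fin.last m) ω ≤
        orderStat (⌈(1 - α) * (m + 1 : ℝ)⌉).toNat
          (List.ofFn fun i : Fin m => R i.castSucc ω)} := by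
  set k := (⌈(1 - α) * (m + 1 : ℝ)⌉).toNat
  have hkm : k ≤ m := by omega
  have hrank := card_le_card_mul_measure_strictRank_lt (measurable_pi_lambda _ hmeas) hexch
    (k := k) (by simpa using hkm.trans m.le_succ) (Fin.last m)
  have hlevel : (m + 1) * ENNReal.ofReal (1 - α) ≤ k := by
    have hceil : (1 - α) * ((m : ℝ) + 1) ≤ k := (Int.le_ceil _).trans <| by
      rw [← Int.cast_natCast]; exact Int.cast_le.mpr (Int.self_le_toNat _)
    calc (m + 1) * ENNReal.ofReal (1 - α) = ENNReal.ofReal ((1 - α) * (m + 1)) := by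
          rw [ENNReal.ofReal_mul' (by positivity), mul_comm]; norm_cast
      _ ≤ k := by simpa using ENNReal.ofReal_le_ofReal hceil
  have hcover : {ω | strictRank (fun i => R i ω) (Fin.last m) < k} ⊆ {ω | R (Fin.last m) ω ≤
      orderStat k (List.ofFn fun i : Fin m => R i.castSucc ω)} := fun ω hω =>
    le_orderStat_of_card_lt hkm _ _ <| lt_of_le_of_lt
      (card_le_card_of_injOn Fin.castSucc (fun i hi => by simpa using hi)
        (Fin.castSucc_injective m).injOn) hω
  rw [Fintype.card_fin, Nat.cast_succ] at hrank
  refine le_trans ?_ (measure_mono hcover)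
  exact (ENNReal.mul_le_mul_iff_right (by simp) (by simp)).mp (hlevel.trans hrank)

/-- Split conformal coverage: for exchangeable residuals `R_0, …, R_m`, the last one is
at most the `⌈(1-α)(m+1)⌉`-th smallest of the first `m` with probability at least `1-α`. -/
theorem conformal_coverage {Ω : Type*} [MeasurableSpace Ω]
    (ℙ : Measure Ω) [IsProbabilityMeasure ℙ]
    (m : ℕ) (α : ℝ) (hα0 : 0 < α) (hα1 : α < 1)
    (R : Fin (m + 1) → Ω → ℝ) (hmeas : ∀ i, Measurable (R i))
    (hexch : ∀ σ : Equiv.Perm (Fin (m + 1)),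
      Measure.map (fun ω i => R (σ i) ω) ℙ = Measure.map (fun ω i => R i ω) ℙ)
    (hk : (⌈(1 - α) * (m + 1)⌉ : ℤ) ≤ (m : ℤ)) :
    ENNReal.ofReal (1 - α) ≤
      ℙ {ω | R (Fin.last m) ω ≤
        orderStat (⌈(1 - α) * (m + 1 : ℝ)⌉).toNat
          (List.ofFn fun i : Fin m => R i.castSucc ω)} :=
  conformal_coverage_general ℙ m α R hmeas hexch hk
end

section
/- Fix α ∈ (0,1) and M > 0. There exist a linear prediction model μ̂(x) = β₁x₁ + β₂x₂ on ℝ² with β₂ ≠ 0, a joint distribution P of (X, Y) with Y = X₁ + X₂ and X₁, X₂ ∼ Uniform[0,1], and a contaminated test point X̃ = (X₁, z) with a deterministic outlier value z in the second coordinate, such that for any prediction interval of the form μ̂(X̃) ± q̂ that satisfies P(Y ∈ μ̂(X̃) ± q̂) ≥ 1 - α, one has P(q̂ ≥ M) ≥ 1 - α. Consequently the expected interval length tends to infinity as M → ∞. -/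
/-!
Take `μ̂(x) = x₁ + x₂` and the outlier `z = -M`. The residual `Y - μ̂(X̃) = X₂ + M` is then at least
`M` almost surely, because `X₂ ≥ 0`; so on the coverage event the radius is already at least `M`.
-/

open MeasureTheory

theorem ae_mem_of_map_eq_restrict {Ω α : Type*} [MeasurableSpace Ω] [MeasurableSpace α]
    {μ : Measure Ω} {ν : Measure α} {X : Ω → α} {s : Set α} (hX : AEMeasurable X μ)
    (hs : MeasurableSet s) (hmap : μ.map X = ν.restrict s) : ∀ᵐ ω ∂μ, X ω ∈ s :=
  ae_of_ae_map hX (hmap ▸ ae_restrict_mem hs)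

theorem measure_abs_le_le_measure_le_of_ae_le_abs {Ω : Type*} [MeasurableSpace Ω]
    {μ : Measure Ω} {R q : Ω → ℝ} {M : ℝ} (h : ∀ᵐ ω ∂μ, M ≤ |R ω|) :
    μ {ω | |R ω| ≤ q ω} ≤ μ {ω | M ≤ q ω} :=
  measure_mono_ae (h.mono fun _ hM hR => hM.trans hR)

theorem impossibility_general (α M : ℝ) :
    ∃ β₁ β₂ z : ℝ, β₂ ≠ 0 ∧
      ∀ (Ω : Type) (_ : MeasurableSpace Ω) (ℙ : Measure Ω), IsProbabilityMeasure ℙ →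
        ∀ (X₁ X₂ : Ω → ℝ), Measurable X₁ → Measurable X₂ →
          Measure.map X₁ ℙ = volume.restrict (Set.Icc (0 : ℝ) 1) →
          Measure.map X₂ ℙ = volume.restrict (Set.Icc (0 : ℝ) 1) →
          ∀ qhat : Ω → ℝ, (∀ ω, 0 ≤ qhat ω) →
            ENNReal.ofReal (1 - α) ≤
              ℙ {ω | |(X₁ ω + X₂ ω) - (β₁ * X₁ ω + β₂ * z)| ≤ qhat ω} →
            ENNReal.ofReal (1 - α) ≤ ℙ {ω | M ≤ qhat ω} := by
  refine ⟨1, 1, -M, one_ne_zero, ?_⟩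
  intro Ω _ ℙ _ X₁ X₂ _ hX₂ _ hmap₂ qhat _ hcov
  have hX₂_mem := ae_mem_of_map_eq_restrict hX₂.aemeasurable measurableSet_Icc hmap₂
  refine hcov.trans (measure_abs_le_le_measure_le_of_ae_le_abs ?_)
  filter_upwards [hX₂_mem] with ω ⟨hX₂_nonneg, _⟩
  rw [show X₁ ω + X₂ ω - (1 * X₁ ω + 1 * -M) = X₂ ω + M by ring]
  exact (le_add_of_nonneg_left hX₂_nonneg).trans (le_abs_self _)

/-- Impossibility theorem: if the processed test feature still contains a cellwise outlier,
any symmetric prediction interval `μ̂(X̃) ± qhat` with `1-α` coverage must have radius at least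
`M` with probability at least `1-α`. -/
theorem impossibility (α M : ℝ) (hα0 : 0 < α) (hα1 : α < 1) (hM : 0 < M) :
    ∃ β₁ β₂ z : ℝ, β₂ ≠ 0 ∧
      ∀ (Ω : Type) (_ : MeasurableSpace Ω) (ℙ : Measure Ω), IsProbabilityMeasure ℙ →
        ∀ (X₁ X₂ : Ω → ℝ), Measurable X₁ → Measurable X₂ →
          Measure.map X₁ ℙ = volume.restrict (Set.Icc (0 : ℝ) 1) →
          Measure.map X₂ ℙ = volume.restrict (Set.Icc (0 : ℝ) 1) →
          ∀ qhat : Ω → ℝ, (∀ ω, 0 ≤ qhat ω) →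
            ENNReal.ofReal (1 - α) ≤
              ℙ {ω | |(X₁ ω + X₂ ω) - (β₁ * X₁ ω + β₂ * z)| ≤ qhat ω} →
            ENNReal.ofReal (1 - α) ≤ ℙ {ω | M ≤ qhat ω} :=
  impossibility_general α M
end

section
/- Jackknife+ counting lemma: Let m ≥ 1 and let A ∈ {0,1}^{(m+1)×(m+1)} be any matrix with A_{pq} + A_{qp} ≤ 1 for all p ≠ q and A_{pp} = 0 (derived from comparisons D_{pq} > D_{qp} with D_{pp} = +∞). Define the set of strange points S(A) = {p : Σ_q A_{pq} ≥ (1-α)(m+1)}. Then |S(A)| < 2α(m+1). -/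
/-!
Let `S` be the set of strange points among the `n` points. For `p ∈ S`, at most `n - |S|` of
its wins are against points outside `S`, so it beats at least `|S| - α n` strange points.
Summing over `S` gives at least `|S| (|S| - α n)` wins inside `S`; on the other hand each of the
`|S| (|S| - 1) / 2` unordered pairs of strange points contributes at most one win.
Hence `|S| - α n ≤ (|S| - 1) / 2`.
-/

open Finset

namespace Jackknife

variable {ι : Type*}

noncomputable def strangePoints [Fintype ι] (f : ι → ι → ℝ) (α : ℝ) : Finset ι :=
  univ.filter fun p => (1 - α) * Fintype.card ι ≤ ∑ q, f p q

lemma sum_sub_card_compl_le_sum [Fintype ι] {f : ι → ℝ} (hf : ∀ q, f q ≤ 1) (S : Finset ι) :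
    ∑ q, f q - (Fintype.card ι - #S) ≤ ∑ q ∈ S, f q := by
  classical
  have hcompl : ∑ q ∈ Sᶜ, f q ≤ #Sᶜ := by
    simpa using sum_le_card_nsmul Sᶜ f 1 fun q _ => hf q
  rw [card_compl, Nat.cast_sub (card_le_univ S)] at hcompl
  rw [← sum_add_sum_compl S f]
  linarith

lemma two_mul_sum_sum_le {f : ι → ι → ℝ} (hasym : ∀ p q, p ≠ q → f p q + f q p ≤ 1)
    (hdiag : ∀ p, f p p = 0) (S : Finset ι) :
    2 * ∑ p ∈ S, ∑ q ∈ S, f p q ≤ #S * (#S - 1) := by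
  classical
  have hrow : ∀ p ∈ S, ∑ q ∈ S, (f p q + f q p) ≤ #S - 1 := by
    intro p hp
    rw [← sum_erase S (by simp [hdiag p] : f p p + f p p = 0)]
    calc ∑ q ∈ S.erase p, (f p q + f q p)
        ≤ #(S.erase p) • (1 : ℝ) :=
          sum_le_card_nsmul _ _ _ fun q hq => hasym p q (ne_of_mem_erase hq).symm
      _ = #S - 1 := by
          rw [card_erase_of_mem hp, nsmul_one, Nat.cast_pred (card_pos.mpr ⟨p, hp⟩)]
  calc 2 * ∑ p ∈ S, ∑ q ∈ S, f p q = ∑ p ∈ S, ∑ q ∈ S, (f p q + f q p) := by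
        simp only [sum_add_distrib, sum_comm (f := fun p q => f q p)]
        ring
    _ ≤ #S • ((#S : ℝ) - 1) := sum_le_card_nsmul _ _ _ hrow
    _ = #S * (#S - 1) := nsmul_eq_mul _ _

lemma card_sub_mul_le_sum_strangePoints [Fintype ι] {f : ι → ι → ℝ} (hf : ∀ p q, f p q ≤ 1)
    {α : ℝ} {p : ι} (hp : p ∈ strangePoints f α) :
    #(strangePoints f α) - α * Fintype.card ι ≤ ∑ q ∈ strangePoints f α, f p q := by
  have hwins := (mem_filter.mp hp).2
  have := sum_sub_card_compl_le_sum (hf p) (strangePoints f α)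
  linarith

theorem card_strangePoints_lt [Fintype ι] [Nonempty ι] {f : ι → ι → ℝ} (hf : ∀ p q, f p q ≤ 1)
    (hasym : ∀ p q, p ≠ q → f p q + f q p ≤ 1) (hdiag : ∀ p, f p p = 0) {α : ℝ} (hα : 0 < α) :
    (#(strangePoints f α) : ℝ) < 2 * α * Fintype.card ι := by
  set S := strangePoints f α
  rcases S.eq_empty_or_nonempty with hS | hS
  · simp only [hS, card_empty, Nat.cast_zero]
    positivity
  have hlow : #S • ((#S : ℝ) - α * Fintype.card ι) ≤ ∑ p ∈ S, ∑ q ∈ S, f p q :=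
    card_nsmul_le_sum _ _ _ fun p hp => card_sub_mul_le_sum_strangePoints hf hp
  have hup := two_mul_sum_sum_le hasym hdiag S
  have hpos : (0 : ℝ) < #S := by exact_mod_cast hS.card_pos
  rw [nsmul_eq_mul] at hlow
  nlinarith

end Jackknife

open Jackknife in
theorem strange_points_bound_general (m : ℕ) (α : ℝ) (hα0 : 0 < α)
    (A : Fin (m + 1) → Fin (m + 1) → ℕ)
    (hA01 : ∀ p q, A p q ≤ 1)
    (hasym : ∀ p q, p ≠ q → A p q + A q p ≤ 1)
    (hdiag : ∀ p, A p p = 0) :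
    ((Finset.univ.filter fun p : Fin (m + 1) =>
        (1 - α) * (m + 1 : ℝ) ≤ ∑ q, (A p q : ℝ)).card : ℝ) < 2 * α * (m + 1) := by
  have h := card_strangePoints_lt (f := fun p q => (A p q : ℝ))
    (fun p q => by exact_mod_cast hA01 p q)
    (fun p q hpq => by exact_mod_cast hasym p q hpq) (fun p => by simp [hdiag p]) hα0
  simpa [strangePoints] using h

/-- Jackknife+ counting lemma: for a strict pairwise comparison matrix `A` on `m+1` points,
the number of strange points (winning at least `(1-α)(m+1)` comparisons) is less
than `2α(m+1)`. -/
theorem strange_points_bound (m : ℕ) (hm : 1 ≤ m) (α : ℝ) (hα0 : 0 < α) (hα1 : α < 1)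
    (A : Fin (m + 1) → Fin (m + 1) → ℕ)
    (hA01 : ∀ p q, A p q ≤ 1)
    (hasym : ∀ p q, p ≠ q → A p q + A q p ≤ 1)
    (hdiag : ∀ p, A p p = 0) :
    ((Finset.univ.filter fun p : Fin (m + 1) =>
        (1 - α) * (m + 1 : ℝ) ≤ ∑ q, (A p q : ℝ)).card : ℝ) < 2 * α * (m + 1) :=
  strange_points_bound_general m α hα0 A hA01 hasym hdiag
end
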